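/- arXiv:2007.04227 — 4 statements merged into one kernel-verified Lean document; each statement's English description precedes it below -/
import Mathlib

section
/- For all natural numbers k, k', m, ∫₀^∞ x^m L_k^{(m)}(x) L_{k'}^{(m)}(x) e^{-x} dx = ((k+m)!/k!) δ_{k,k'}, where L_k^{(m)} is the generalized (associated) Laguerre polynomial. -/
/-!
Expand both polynomials and integrate term by term with `∫₀^∞ x^p e^{-x} dx = p!`. The moment
`∫₀^∞ x^(m+j) L_{k'}^{(m)}(x) e^{-x} dx` becomes an alternating binomial sum which
Chu–Vandermonde evaluates to `(-1)^{k'} C(j, k') (m + j)!`. It vanishes for `j < k'`, so pairing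
with the powers `x^j`, `j ≤ k`, of `L_k^{(m)}` gives `0` for `k < k'`, and for `k = k'` only the
leading coefficient `(-1)^k / k!` of `L_k^{(m)}` contributes.
-/

open MeasureTheory

/-- Generalized (associated) Laguerre polynomial
`L^{(m)}_n(x) = ∑_{j=0}^n C(n+m, n-j) (-x)^j / j!`. -/
noncomputable def genLaguerre (n m : ℕ) (x : ℝ) : ℝ :=
  ∑ j ∈ Finset.range (n + 1), ((n + m).choose (n - j) : ℝ) * (-x) ^ j / j.factorial

open Finset Set

/-- Chu–Vandermonde for `C(k + m, ·)` and `C(-(m + n + 1), i) = (-1)^i C(m + n + i, i)`: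
the left side is `C(k - n - 1, k) = (-1)^k C(n, k)`. -/
theorem sum_neg_one_pow_mul_choose_mul_add_choose (k m n : ℕ) :
    ∑ i ∈ range (k + 1), (-1 : ℤ) ^ i * ((k + m).choose (k - i) * (m + n + i).choose i)
      = (-1) ^ k * n.choose k := by
  have upper_neg (r : ℤ) (i : ℕ) :
      Ring.choose (-(r + 1)) i = (-1) ^ i * Ring.choose (r + i) i := by
    rw [Ring.choose_neg, Units.smul_def, Int.coe_negOnePow_natCast, smul_eq_mul, add_right_comm,
      add_sub_cancel_right]
  have vandermonde := Ring.add_choose_eq (r := ((k + m : ℕ) : ℤ)) (s := -((m + n : ℕ) + 1 : ℤ)) k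
    (Commute.all _ _)
  rw [← Nat.sum_antidiagonal_swap, Nat.sum_antidiagonal_eq_sum_range_succ_mk,
    show ((k + m : ℕ) : ℤ) + -((m + n : ℕ) + 1) = -((n - k : ℤ) + 1) by push_cast; ring,
    upper_neg, sub_add_cancel, Ring.choose_natCast] at vandermonde
  simp only [Prod.swap, upper_neg, ← Nat.cast_add, Ring.choose_natCast] at vandermonde
  rw [vandermonde]
  exact sum_congr rfl fun i _ => by ring

lemma integrableOn_pow_mul_exp_neg (p : ℕ) :
    IntegrableOn (fun x : ℝ => x ^ p * Real.exp (-x)) (Ioi 0) := by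
  refine (Real.GammaIntegral_convergent (s := p + 1) (by positivity)).congr_fun
    (fun x _ => ?_) measurableSet_Ioi
  simp [mul_comm]

lemma integral_pow_mul_exp_neg (p : ℕ) :
    ∫ x in Ioi (0 : ℝ), x ^ p * Real.exp (-x) = p.factorial := by
  rw [← Real.Gamma_nat_eq_factorial, Real.Gamma_eq_integral (by positivity)]
  exact setIntegral_congr_fun measurableSet_Ioi fun x _ => by simp [mul_comm]

lemma integral_sum_mul_pow_mul_exp_neg {ι : Type*} (s : Finset ι) (c : ι → ℝ) (p : ι → ℕ) :
    ∫ x in Ioi (0 : ℝ), ∑ i ∈ s, c i * (x ^ p i * Real.exp (-x))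
      = ∑ i ∈ s, c i * (p i).factorial := by
  rw [integral_finsetSum _ fun i _ => (integrableOn_pow_mul_exp_neg (p i)).const_mul (c i)]
  simp only [integral_const_mul, integral_pow_mul_exp_neg]

noncomputable def genLaguerreCoeff (n m j : ℕ) : ℝ :=
  (-1) ^ j * (n + m).choose (n - j) / j.factorial

lemma genLaguerre_eq_sum_coeff_mul_pow (n m : ℕ) (x : ℝ) :
    genLaguerre n m x = ∑ j ∈ range (n + 1), genLaguerreCoeff n m j * x ^ j := by
  refine sum_congr rfl fun j _ => ?_
  rw [genLaguerreCoeff, neg_pow]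
  ring

/-- `∑ᵢ cᵢ (m + j + i)!` is the moment `∫₀^∞ x^(m+j) L_k^{(m)}(x) e^{-x} dx`. -/
lemma sum_genLaguerreCoeff_mul_factorial (k m j : ℕ) :
    ∑ i ∈ range (k + 1), genLaguerreCoeff k m i * (m + j + i).factorial
      = (-1) ^ k * j.choose k * (m + j).factorial := by
  have factorial_div (i : ℕ) : ((m + j + i).factorial : ℝ) / i.factorial
      = (m + j + i).choose i * (m + j).factorial := by
    rw [div_eq_iff (by positivity), ← Nat.add_choose_mul_factorial_mul_factorial]
    push_cast
    ring
  have key : ∑ i ∈ range (k + 1), (-1 : ℝ) ^ i * ((k + m).choose (k - i) * (m + j + i).choose i)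
      = (-1) ^ k * j.choose k :=
    mod_cast sum_neg_one_pow_mul_choose_mul_add_choose k m j
  calc ∑ i ∈ range (k + 1), genLaguerreCoeff k m i * (m + j + i).factorial
      = ∑ i ∈ range (k + 1), (-1 : ℝ) ^ i * ((k + m).choose (k - i) * (m + j + i).choose i)
          * (m + j).factorial := by
        refine sum_congr rfl fun i _ => ?_
        rw [genLaguerreCoeff, mul_comm_div, factorial_div]
        ring
    _ = (-1) ^ k * j.choose k * (m + j).factorial := by rw [← sum_mul, key]

lemma integral_genLaguerre_mul_genLaguerre_eq_sum (k k' m : ℕ) :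
    ∫ x in Ioi (0 : ℝ), x ^ m * genLaguerre k m x * genLaguerre k' m x * Real.exp (-x)
      = ∑ j ∈ range (k + 1),
          genLaguerreCoeff k m j * ((-1) ^ k' * j.choose k' * (m + j).factorial) := by
  calc ∫ x in Ioi (0 : ℝ), x ^ m * genLaguerre k m x * genLaguerre k' m x * Real.exp (-x)
      = ∫ x in Ioi (0 : ℝ), ∑ p ∈ range (k + 1) ×ˢ range (k' + 1),
          genLaguerreCoeff k m p.1 * genLaguerreCoeff k' m p.2
            * (x ^ (m + p.1 + p.2) * Real.exp (-x)) := by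
        refine setIntegral_congr_fun measurableSet_Ioi fun x _ => ?_
        simp only [genLaguerre_eq_sum_coeff_mul_pow, sum_product, sum_mul, mul_sum]
        rw [sum_comm]
        exact sum_congr rfl fun j _ => sum_congr rfl fun i _ => by ring
    _ = ∑ j ∈ range (k + 1),
          genLaguerreCoeff k m j * ((-1) ^ k' * j.choose k' * (m + j).factorial) := by
        rw [integral_sum_mul_pow_mul_exp_neg, sum_product]
        refine sum_congr rfl fun j _ => ?_
        rw [← sum_genLaguerreCoeff_mul_factorial, mul_sum]
        exact sum_congr rfl fun i _ => mul_assoc _ _ _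

lemma integral_genLaguerre_mul_genLaguerre_of_lt {k k' : ℕ} (m : ℕ) (h : k < k') :
    ∫ x in Ioi (0 : ℝ), x ^ m * genLaguerre k m x * genLaguerre k' m x * Real.exp (-x) = 0 := by
  rw [integral_genLaguerre_mul_genLaguerre_eq_sum]
  refine sum_eq_zero fun j hj => ?_
  rw [Nat.choose_eq_zero_of_lt (by grind)]
  simp

lemma integral_genLaguerre_sq (k m : ℕ) :
    ∫ x in Ioi (0 : ℝ), x ^ m * genLaguerre k m x * genLaguerre k m x * Real.exp (-x)
      = (k + m).factorial / k.factorial := by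
  rw [integral_genLaguerre_mul_genLaguerre_eq_sum, sum_eq_single_of_mem k (self_mem_range_succ k)]
  · rw [genLaguerreCoeff, Nat.sub_self, Nat.choose_zero_right, Nat.choose_self, add_comm m k,
      Nat.cast_one, mul_one, div_mul_eq_mul_div, ← mul_assoc, ← mul_pow, neg_one_mul,
      neg_neg, one_pow, one_mul]
  · intro j hj hjk
    rw [Nat.choose_eq_zero_of_lt (by grind)]
    simp

/-- Orthogonality of the generalized Laguerre polynomials:
`∫₀^∞ x^m L_k^{(m)}(x) L_{k'}^{(m)}(x) e^{-x} dx = ((k+m)!/k!) δ_{k,k'}`. -/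
theorem genLaguerre_orthogonality (k k' m : ℕ) :
    ∫ x in Set.Ioi (0 : ℝ),
        x ^ m * genLaguerre k m x * genLaguerre k' m x * Real.exp (-x)
      = ((k + m).factorial : ℝ) / (k.factorial : ℝ) * (if k = k' then 1 else 0) := by
  rcases lt_trichotomy k k' with h | rfl | h
  · rw [integral_genLaguerre_mul_genLaguerre_of_lt m h, if_neg h.ne, mul_zero]
  · rw [integral_genLaguerre_sq, if_pos rfl, mul_one]
  · simp_rw [mul_right_comm _ (genLaguerre k m _) (genLaguerre k' m _)]
    rw [integral_genLaguerre_mul_genLaguerre_of_lt m h, if_neg h.ne', mul_zero]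
end

section
/- For every complex γ with Re(γ) > -1/2, every m ∈ ℕ, and every x ≥ 0, the series ∑_{k=0}^∞ γ^k/(1+γ)^{k+m+1} L_k^{(m)}(x) converges to e^{-γ x}. -/
open Finset Nat

theorem HasSum.sum_antidiagonal {α : Type*} [AddCommMonoid α] [TopologicalSpace α]
    [ContinuousAdd α] [RegularSpace α] {f : ℕ × ℕ → α} {a : α} (hf : HasSum f a) :
    HasSum (fun n ↦ ∑ p ∈ antidiagonal n, f p) a := by
  rw [← HasAntidiagonal.sigmaAntidiagonalEquivProd.hasSum_iff] at hf
  exact hf.sigma fun n ↦ (antidiagonal n).hasSum fun p ↦ f p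

section LaguerreGeneratingFunction

variable {𝕜 : Type*} [RCLike 𝕜]

noncomputable def laguerreDoubleTerm (m : ℕ) (z t : 𝕜) (p : ℕ × ℕ) : 𝕜 :=
  z ^ p.1 / p.1 ! * ((p.2 + (p.1 + m)).choose (p.1 + m) * t ^ p.2)

theorem hasSum_laguerreDoubleTerm_fiber (m j : ℕ) (z : 𝕜) {t : 𝕜} (ht : ‖t‖ < 1) :
    HasSum (fun i ↦ laguerreDoubleTerm m z t (j, i))
      ((z / (1 - t)) ^ j / j ! / (1 - t) ^ (m + 1)) := by
  have hsum : z ^ j / j ! * (1 / (1 - t) ^ (j + m + 1)) =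
      (z / (1 - t)) ^ j / j ! / (1 - t) ^ (m + 1) := by
    rw [div_pow, add_assoc, pow_add, one_div, mul_inv]
    ring
  exact hsum ▸ (hasSum_choose_mul_geometric_of_norm_lt_one (j + m) ht).mul_left (z ^ j / j !)

theorem norm_laguerreDoubleTerm (m : ℕ) (z t : 𝕜) (p : ℕ × ℕ) :
    ‖laguerreDoubleTerm m z t p‖ = laguerreDoubleTerm m ‖z‖ ‖t‖ p := by
  simp only [laguerreDoubleTerm, norm_mul, norm_div, norm_pow, RCLike.norm_natCast]

theorem summable_laguerreDoubleTerm (m : ℕ) (z : 𝕜) {t : 𝕜} (ht : ‖t‖ < 1) :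
    Summable (laguerreDoubleTerm m z t) := by
  refine Summable.of_norm ?_
  simp_rw [norm_laguerreDoubleTerm]
  have ht' : ‖‖t‖‖ < 1 := by rwa [norm_norm]
  refine (summable_prod_of_nonneg fun p ↦ ?_).mpr
    ⟨fun j ↦ (hasSum_laguerreDoubleTerm_fiber m j _ ht').summable, ?_⟩
  · unfold laguerreDoubleTerm
    positivity
  · simp_rw [fun j ↦ (hasSum_laguerreDoubleTerm_fiber m j ‖z‖ ht').tsum_eq]
    exact ((NormedSpace.expSeries_div_hasSum_exp _).div_const _).summable

theorem hasSum_laguerreDoubleTerm (m : ℕ) (z : 𝕜) {t : 𝕜} (ht : ‖t‖ < 1) :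
    HasSum (laguerreDoubleTerm m z t) (NormedSpace.exp (z / (1 - t)) / (1 - t) ^ (m + 1)) := by
  have hsum := (summable_laguerreDoubleTerm m z ht).hasSum
  rwa [(hsum.prod_fiberwise fun j ↦ hasSum_laguerreDoubleTerm_fiber m j z ht).unique
    ((NormedSpace.expSeries_div_hasSum_exp _).div_const _)] at hsum

theorem sum_antidiagonal_laguerreDoubleTerm (m k : ℕ) (x : ℝ) (t : 𝕜) :
    ∑ p ∈ antidiagonal k, laguerreDoubleTerm m (-x * t) t p = t ^ k * genLaguerre k m x := by
  rw [Nat.sum_antidiagonal_eq_sum_range_succ_mk, genLaguerre]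
  push_cast
  rw [Finset.mul_sum]
  refine Finset.sum_congr rfl fun j hj ↦ ?_
  have hjk : j ≤ k := Nat.lt_succ_iff.mp (Finset.mem_range.mp hj)
  have hchoose : (k - j + (j + m)).choose (j + m) = (k + m).choose (k - j) := by
    rw [show k - j + (j + m) = k + m by omega,
      Nat.choose_symm_of_eq_add (by omega : k + m = j + m + (k - j))]
  rw [laguerreDoubleTerm, hchoose, ← pow_sub_mul_pow t hjk]
  ring

theorem hasSum_pow_mul_genLaguerre (m : ℕ) (x : ℝ) {t : 𝕜} (ht : ‖t‖ < 1) :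
    HasSum (fun k ↦ t ^ k * genLaguerre k m x)
      (NormedSpace.exp (-x * t / (1 - t)) / (1 - t) ^ (m + 1)) := by
  simpa only [sum_antidiagonal_laguerreDoubleTerm] using
    (hasSum_laguerreDoubleTerm m (-x * t) ht).sum_antidiagonal

end LaguerreGeneratingFunction

theorem Complex.norm_div_one_add_lt_one {γ : ℂ} (hγ : -1 / 2 < γ.re) : ‖γ / (1 + γ)‖ < 1 := by
  have hsq : ‖γ‖ ^ 2 < ‖1 + γ‖ ^ 2 := by
    simp only [Complex.sq_norm, Complex.normSq_apply, Complex.add_re, Complex.add_im,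
      Complex.one_re, Complex.one_im]
    linarith
  have hlt := lt_of_pow_lt_pow_left₀ 2 (norm_nonneg _) hsq
  rw [norm_div, div_lt_one ((norm_nonneg _).trans_lt hlt)]
  exact hlt

theorem genLaguerre_exp_expansion_general (γ : ℂ) (hγ : -1 / 2 < γ.re) (m : ℕ) (x : ℝ) :
    HasSum (fun k : ℕ => γ ^ k / (1 + γ) ^ (k + m + 1) * (genLaguerre k m x : ℂ))
      (Complex.exp (-γ * x)) := by
  have h1γ : 1 + γ ≠ 0 := by
    refine Complex.ne_zero_of_re_pos ?_
    rw [Complex.add_re, Complex.one_re]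
    linarith
  have h1t : 1 - γ / (1 + γ) = (1 + γ)⁻¹ := by
    field_simp
    ring
  have hgen := hasSum_pow_mul_genLaguerre m x (Complex.norm_div_one_add_lt_one hγ)
  rw [RCLike.ofReal_eq_complex_ofReal, h1t, div_inv_eq_mul, inv_pow, div_inv_eq_mul, mul_assoc,
    div_mul_cancel₀ _ h1γ, ← Complex.exp_eq_exp_ℂ] at hgen
  have hterm (k : ℕ) : (γ / (1 + γ)) ^ k * genLaguerre k m x / (1 + γ) ^ (m + 1) =
      γ ^ k / (1 + γ) ^ (k + m + 1) * genLaguerre k m x := by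
    rw [div_pow]
    field_simp
    ring
  have hlim : Complex.exp (-x * γ) * (1 + γ) ^ (m + 1) / (1 + γ) ^ (m + 1) =
      Complex.exp (-γ * x) := by
    rw [mul_div_cancel_right₀ _ (pow_ne_zero _ h1γ), neg_mul_comm, mul_comm]
  simpa only [hterm, hlim] using hgen.div_const ((1 + γ) ^ (m + 1))

/-- Laguerre expansion of exponentials: for `Re γ > -1/2`, `m ∈ ℕ` and `x ≥ 0`,
`∑_{k=0}^∞ γ^k/(1+γ)^{k+m+1} L_k^{(m)}(x) = e^{-γ x}` (convergent series). -/
theorem genLaguerre_exp_expansion (γ : ℂ) (hγ : -1 / 2 < γ.re) (m : ℕ) (x : ℝ)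
    (hx : 0 ≤ x) :
    HasSum (fun k : ℕ => γ ^ k / (1 + γ) ^ (k + m + 1) * (genLaguerre k m x : ℂ))
      (Complex.exp (-γ * x)) :=
  genLaguerre_exp_expansion_general γ hγ m x
end

section
/- For every integer n ≥ 2, ∫₀^∞ x^4 L_{n-2}^{(3)}(x) e^{-(n-1)x/2} e^{-x} dx = (2^6 n (n-1)^{n-3} / (n+1)^{n+3}) · (n+1)!/(n-2)!. -/
open MeasureTheory

/-!
Expanding `L_m^{(α)}` termwise, each term of `x^(α+1) L_m^{(α)}(x) e^{-px}` is a Gamma integral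
`∫ x^k e^{-px} = k!/p^(k+1)`. Because the power of `x` is exactly `α + 1`, the coefficients
`C(m+α, m-j) (j+α+1)!/j!` collapse to `(m+α)!/m! · (j+α+1) C(m,j)`, so the whole integral is
`(m+α)!/(m! p^(α+2))` times the binomial sum `∑ C(m,j) (α+1+j) (-1/p)^j
= (α+1)(1-1/p)^m - (m/p)(1-1/p)^(m-1)`. For `α = 3`, `m = n - 2`, `p = (n+1)/2` we have
`1 - 1/p = (n-1)/(n+1)`, and the closed form follows.
-/

open Finset Set Real
open scoped Nat

theorem integral_pow_mul_exp_neg_mul_Ioi (k : ℕ) {c : ℝ} (hc : 0 < c) :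
    ∫ x in Ioi 0, x ^ k * exp (-(c * x)) = k ! / c ^ (k + 1) := by
  have key := integral_rpow_mul_exp_neg_mul_Ioi (by positivity : (0 : ℝ) < k + 1) hc
  simp only [add_sub_cancel_right, rpow_natCast] at key
  rw [key, Gamma_nat_eq_factorial, ← Nat.cast_add_one, rpow_natCast, one_div_pow,
    one_div_mul_eq_div]

theorem integrableOn_pow_mul_exp_neg_mul_Ioi (k : ℕ) {c : ℝ} (hc : 0 < c) :
    IntegrableOn (fun x ↦ x ^ k * exp (-(c * x))) (Ioi 0) :=
  .of_integral_ne_zero (by rw [integral_pow_mul_exp_neg_mul_Ioi k hc]; positivity)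

theorem sum_range_choose_mul_pow {R : Type*} [CommSemiring R] (n : ℕ) (y : R) :
    ∑ j ∈ range (n + 1), (n.choose j : R) * y ^ j = (1 + y) ^ n := by
  rw [add_comm (1 : R), add_pow]
  refine sum_congr rfl fun j _ ↦ ?_
  rw [one_pow, mul_one, mul_comm]

theorem sum_range_mul_choose_mul_pow {R : Type*} [CommSemiring R] (n : ℕ) (y : R) :
    ∑ j ∈ range (n + 1), (j : R) * n.choose j * y ^ j = n * y * (1 + y) ^ (n - 1) := by
  cases n with
  | zero => simp
  | succ n =>
    have absorb (k : ℕ) :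
        ((k + 1 : ℕ) : R) * (n + 1).choose (k + 1) = (n + 1 : ℕ) * n.choose k := by
      rw [← Nat.cast_mul, ← Nat.cast_mul, mul_comm, ← Nat.add_one_mul_choose_eq]
    rw [sum_range_succ', Nat.add_sub_cancel, ← sum_range_choose_mul_pow, mul_sum]
    simp only [absorb, Nat.cast_zero, zero_mul, add_zero]
    refine sum_congr rfl fun k _ ↦ ?_
    ring

theorem choose_sub_mul_factorial_mul_factorial {m j : ℕ} (α : ℕ) (hj : j ≤ m) :
    (m + α).choose (m - j) * (j + α + 1)! * m !
      = (m + α)! * ((j + α + 1) * m.choose j * j !) := by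
  have h₁ := Nat.choose_mul_factorial_mul_factorial (by omega : m - j ≤ m + α)
  have h₂ := Nat.choose_mul_factorial_mul_factorial hj
  rw [show m + α - (m - j) = j + α by omega] at h₁
  rw [← h₁, ← h₂, Nat.factorial_succ]
  ring

theorem pow_mul_genLaguerre_eq_sum (m α : ℕ) (x : ℝ) :
    x ^ (α + 1) * genLaguerre m α x = ∑ j ∈ range (m + 1),
      ((m + α).choose (m - j) * (-1) ^ j / j ! : ℝ) * x ^ (j + α + 1) := by
  rw [genLaguerre, mul_sum]
  refine sum_congr rfl fun j _ ↦ ?_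
  rw [neg_pow]
  ring

theorem integral_pow_mul_genLaguerre_mul_exp_neg_mul (m α : ℕ) {p : ℝ} (hp : 0 < p) :
    ∫ x in Ioi 0, x ^ (α + 1) * genLaguerre m α x * exp (-(p * x))
      = (m + α)! / m ! / p ^ (α + 2)
          * ((α + 1) * (1 - p⁻¹) ^ m - m * p⁻¹ * (1 - p⁻¹) ^ (m - 1)) := by
  have term (j : ℕ) (hj : j ∈ range (m + 1)) :
      ((m + α).choose (m - j) * (-1) ^ j / j ! : ℝ) * ((j + α + 1)! / p ^ (j + α + 1 + 1))
        = (m + α)! / m ! / p ^ (α + 2) * ((α + 1 + j) * m.choose j * (-p⁻¹) ^ j) := by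
    have key : ((m + α).choose (m - j) * (j + α + 1)! * m ! : ℝ)
        = (m + α)! * ((j + α + 1) * m.choose j * j !) := by
      exact_mod_cast choose_sub_mul_factorial_mul_factorial α (mem_range_succ_iff.mp hj)
    rw [neg_pow p⁻¹, inv_pow]
    field_simp
    linear_combination p ^ (j + α + 2) * key
  simp_rw [pow_mul_genLaguerre_eq_sum, sum_mul, mul_assoc]
  rw [integral_finsetSum _ fun j _ ↦
    (integrableOn_pow_mul_exp_neg_mul_Ioi _ hp).const_mul _]
  simp_rw [integral_const_mul, integral_pow_mul_exp_neg_mul_Ioi _ hp]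
  rw [sum_congr rfl term, ← mul_sum]
  simp_rw [add_mul, sum_add_distrib, sum_range_mul_choose_mul_pow, mul_assoc, ← mul_sum,
    sum_range_choose_mul_pow]
  ring

/-- For `n ≥ 2`,
`∫₀^∞ x⁴ L_{n-2}^{(3)}(x) e^{-(n-1)x/2} e^{-x} dx
  = 2⁶ n (n-1)^{n-3}/(n+1)^{n+3} · (n+1)!/(n-2)!`. -/
theorem laguerre_integral_In (n : ℕ) (hn : 2 ≤ n) :
    ∫ x in Set.Ioi (0 : ℝ),
        x ^ 4 * genLaguerre (n - 2) 3 x * Real.exp (-((n : ℝ) - 1) * x / 2) * Real.exp (-x)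
      = 2 ^ 6 * (n : ℝ) * ((n : ℝ) - 1) ^ (n - 3) / ((n : ℝ) + 1) ^ (n + 3)
          * ((n + 1).factorial : ℝ) / ((n - 2).factorial : ℝ) := by
  obtain ⟨m, rfl⟩ : ∃ m, n = m + 2 := ⟨n - 2, by omega⟩
  have hp : (0 : ℝ) < (m + 3) / 2 := by positivity
  have hexp (x : ℝ) :
      exp (-(((m + 2 : ℕ) : ℝ) - 1) * x / 2) * exp (-x) = exp (-((m + 3) / 2 * x)) := by
    rw [← exp_add]
    congr 1
    push_cast
    ring
  have hbase : 1 - ((m + 3 : ℝ) / 2)⁻¹ = (m + 1) / (m + 3) := by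
    field_simp
    ring
  simp_rw [Nat.add_sub_cancel, mul_assoc _ (exp _) (exp _), hexp]
  rw [show (4 : ℕ) = 3 + 1 from rfl, integral_pow_mul_genLaguerre_mul_exp_neg_mul m 3 hp, hbase]
  -- At `n = 2` the exponents `m - 1` and `n - 3` are truncated to `0`.
  rcases m with _ | l
  · norm_num [Nat.factorial]
  · rw [show l + 1 + 2 - 3 = l by omega, show l + 1 + 2 + 1 = l + 1 + 3 by ring,
      Nat.add_sub_cancel]
    push_cast
    simp only [div_pow]
    field_simp
    ring
end

section
/- Let l ∈ ℕ and let h_l be the self-adjoint operator on L²(0,∞) associated with the quadratic form q(g) = (1/2)∫₀^∞ g'(r)² dr + ∫₀^∞ (l(l+1)/(2r²) - 1/r) g(r)² dr on form domain H¹₀(0,∞). Then h_l ≥ -1/(2(l+1)²), i.e., q(g) ≥ -(1/(2(l+1)²)) ‖g‖²_{L²} for all g in the form domain. -/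
/-!
With `a = l + 1`, the ground state `r ^ a * exp (-r / a)` has logarithmic derivative
`w r = a / r - 1 / a`, which solves the Riccati equation `w² + w' = l(l+1)/r² - 2/r + 1/a²`.
Completing the square with `w` shows that `q(g) + ‖g‖² / (2a²)` is at least the limit of the
boundary terms `w g² / 2` at `0` and at `∞`. Both vanish: near `0` because
`g(r)² ≤ r ∫₀^r g'²` (Cauchy–Schwarz and `g(0) = 0`), at `∞` because `g²` and its derivative
`2 g g'` are integrable.
-/

open MeasureTheory Set Filter Topology

theorem HasDerivAt.fun_sq {f : ℝ → ℝ} {f' x : ℝ} (h : HasDerivAt f f' x) :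
    HasDerivAt (fun y => f y ^ 2) (2 * f x * f') x := by
  simpa using h.fun_pow 2

theorem aestronglyMeasurable_of_hasDerivAt {f f' : ℝ → ℝ} {s : Set ℝ} (hs : MeasurableSet s)
    (hderiv : ∀ x ∈ s, HasDerivAt f (f' x) x) : AEStronglyMeasurable f' (volume.restrict s) :=
  (aestronglyMeasurable_deriv f _).congr <|
    (ae_restrict_iff' hs).2 <| Eventually.of_forall fun x hx => (hderiv x hx).deriv

-- integrate `2 t g' ≤ t² + g'²`, then take `t = (g b - g a) / (b - a)`
theorem sq_sub_le_mul_integral_sq_deriv {g g' : ℝ → ℝ} {a b : ℝ} (hab : a ≤ b)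
    (hcont : ContinuousOn g (Icc a b)) (hderiv : ∀ x ∈ Ioo a b, HasDerivAt g (g' x) x)
    (hint : IntegrableOn (fun x => g' x ^ 2) (Icc a b)) :
    (g b - g a) ^ 2 ≤ (b - a) * ∫ x in a..b, g' x ^ 2 := by
  have amgm (t : ℝ) : 2 * t * (g b - g a) ≤ t ^ 2 * (b - a) + ∫ x in a..b, g' x ^ 2 := by
    have h := intervalIntegral.sub_le_integral_of_hasDeriv_right_of_le (g := fun x => 2 * t * g x)
      (φ := fun x => t ^ 2 + g' x ^ 2) hab (continuousOn_const.mul hcont)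
      (fun x hx => ((hderiv x hx).const_mul (2 * t)).hasDerivWithinAt)
      ((integrableOn_const measure_Icc_lt_top.ne).add hint)
      (fun x _ => by nlinarith [sq_nonneg (g' x - t)])
    rw [intervalIntegral.integral_add intervalIntegrable_const
      ((intervalIntegrable_iff_integrableOn_Icc_of_le hab).2 hint),
      intervalIntegral.integral_const, smul_eq_mul] at h
    linarith
  rcases hab.eq_or_lt with rfl | hlt
  · simp
  have hL : 0 < b - a := sub_pos.2 hlt
  have h := amgm ((g b - g a) / (b - a))
  have hdiv : (g b - g a) ^ 2 / (b - a) ≤ ∫ x in a..b, g' x ^ 2 := by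
    have e1 : 2 * ((g b - g a) / (b - a)) * (g b - g a) = 2 * ((g b - g a) ^ 2 / (b - a)) := by
      ring
    have e2 : ((g b - g a) / (b - a)) ^ 2 * (b - a) = (g b - g a) ^ 2 / (b - a) := by
      field_simp
    linarith
  rwa [div_le_iff₀' hL] at hdiv

theorem tendsto_intervalIntegral_nhdsGT {f : ℝ → ℝ} {a : ℝ} (hf : IntegrableOn f (Ioi a)) :
    Tendsto (fun x => ∫ t in a..x, f t) (𝓝[>] a) (𝓝 0) := by
  have hIcc : IntegrableOn f (uIcc a (a + 1)) := by
    rw [uIcc_of_le (by linarith), integrableOn_Icc_iff_integrableOn_Ioc]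
    exact hf.mono_set Ioc_subset_Ioi_self
  have h := (intervalIntegral.continuousOn_primitive_interval hIcc a
    left_mem_uIcc).mono_of_mem_nhdsWithin (s := Ioi a)
      (by rw [uIcc_of_le (by linarith)]; exact Icc_mem_nhdsGT (by linarith))
  simpa using h.tendsto

theorem tendsto_intervalIntegral_nhdsGT_prod_atTop {f : ℝ → ℝ} {a : ℝ}
    (hf : IntegrableOn f (Ioi a)) :
    Tendsto (fun p : ℝ × ℝ => ∫ t in p.1..p.2, f t) (𝓝[>] a ×ˢ atTop)
      (𝓝 (∫ t in Ioi a, f t)) := by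
  have hii {x : ℝ} (hx : a < x) : IntervalIntegrable f volume a x :=
    (intervalIntegrable_iff_integrableOn_Ioc_of_le hx.le).2 (hf.mono_set Ioc_subset_Ioi_self)
  have h := ((intervalIntegral_tendsto_integral_Ioi a hf tendsto_id).comp tendsto_snd).sub
    ((tendsto_intervalIntegral_nhdsGT hf).comp (tendsto_fst (f := 𝓝[>] a) (g := atTop)))
  rw [sub_zero] at h
  refine h.congr' ?_
  filter_upwards [prod_mem_prod self_mem_nhdsWithin (eventually_gt_atTop a)] with p hp
  exact intervalIntegral.integral_interval_sub_left (hii hp.2) (hii hp.1)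

theorem tendsto_sq_sub_div_nhdsGT {g g' : ℝ → ℝ} {a : ℝ} (hcont : ContinuousOn g (Ici a))
    (hderiv : ∀ x ∈ Ioi a, HasDerivAt g (g' x) x)
    (hint : IntegrableOn (fun x => g' x ^ 2) (Ioi a)) :
    Tendsto (fun x => (g x - g a) ^ 2 / (x - a)) (𝓝[>] a) (𝓝 0) := by
  refine squeeze_zero' ?_ ?_ (tendsto_intervalIntegral_nhdsGT hint)
  · filter_upwards [self_mem_nhdsWithin] with x (hx : a < x)
    exact div_nonneg (sq_nonneg _) (sub_pos.2 hx).le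
  · filter_upwards [self_mem_nhdsWithin] with x (hx : a < x)
    rw [div_le_iff₀' (sub_pos.2 hx)]
    refine sq_sub_le_mul_integral_sq_deriv hx.le (hcont.mono Icc_subset_Ici_self)
      (fun y hy => hderiv y hy.1) ?_
    rw [integrableOn_Icc_iff_integrableOn_Ioc]
    exact hint.mono_set Ioc_subset_Ioi_self

theorem tendsto_sq_atTop_of_hasDerivAt {g g' : ℝ → ℝ} {a : ℝ}
    (hderiv : ∀ x ∈ Ioi a, HasDerivAt g (g' x) x) (hg : IntegrableOn (fun x => g x ^ 2) (Ioi a))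
    (hg' : IntegrableOn (fun x => g' x ^ 2) (Ioi a)) :
    Tendsto (fun x => g x ^ 2) atTop (𝓝 0) := by
  have hmeas : AEStronglyMeasurable g (volume.restrict (Ioi a)) :=
    ContinuousOn.aestronglyMeasurable (fun x hx => (hderiv x hx).continuousAt.continuousWithinAt)
      measurableSet_Ioi
  have hL2 : MemLp g 2 (volume.restrict (Ioi a)) := (memLp_two_iff_integrable_sq hmeas).2 hg
  have hL2' : MemLp g' 2 (volume.restrict (Ioi a)) :=
    (memLp_two_iff_integrable_sq
      (aestronglyMeasurable_of_hasDerivAt measurableSet_Ioi hderiv)).2 hg'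
  refine tendsto_zero_of_hasDerivAt_of_integrableOn_Ioi (f' := fun x => 2 * (g x * g' x))
    (fun x hx => ?_) ((hL2.integrable_mul hL2').const_mul 2) hg
  exact (hderiv x hx).fun_sq.congr_deriv (mul_assoc _ _ _)

-- `(g'² + (w² + w') g²) / 2 = (g' - w g)² / 2 + (w g² / 2)'`
theorem sub_le_integral_of_riccati {g g' w w' V : ℝ → ℝ} {a b : ℝ} (hab : a ≤ b)
    (hg : ∀ x ∈ Icc a b, HasDerivAt g (g' x) x) (hw : ∀ x ∈ Icc a b, HasDerivAt w (w' x) x)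
    (hV : ∀ x ∈ Ioo a b, w x ^ 2 + w' x = 2 * V x)
    (hint : IntegrableOn (fun x => g' x ^ 2 / 2 + V x * g x ^ 2) (Icc a b)) :
    w b * g b ^ 2 / 2 - w a * g a ^ 2 / 2 ≤ ∫ x in a..b, (g' x ^ 2 / 2 + V x * g x ^ 2) := by
  have hF (x : ℝ) (hx : x ∈ Icc a b) : HasDerivAt (fun x => w x * g x ^ 2 / 2)
      (w' x * g x ^ 2 / 2 + w x * (g x * g' x)) x :=
    (((hw x hx).fun_mul (hg x hx).fun_sq).div_const 2).congr_deriv (by ring)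
  refine intervalIntegral.sub_le_integral_of_hasDeriv_right_of_le hab
    (fun x hx => (hF x hx).continuousAt.continuousWithinAt)
    (fun x hx => (hF x (Ioo_subset_Icc_self hx)).hasDerivWithinAt) hint (fun x hx => ?_)
  nlinarith [sq_nonneg (g' x - w x * g x), hV x hx]

theorem integral_nonneg_of_riccati {g g' w w' V : ℝ → ℝ} {a : ℝ}
    (hg : ∀ x ∈ Ioi a, HasDerivAt g (g' x) x) (hw : ∀ x ∈ Ioi a, HasDerivAt w (w' x) x)
    (hV : ∀ x ∈ Ioi a, w x ^ 2 + w' x = 2 * V x)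
    (hint : IntegrableOn (fun x => g' x ^ 2 / 2 + V x * g x ^ 2) (Ioi a))
    (hleft : Tendsto (fun x => w x * g x ^ 2) (𝓝[>] a) (𝓝 0))
    (hright : Tendsto (fun x => w x * g x ^ 2) atTop (𝓝 0)) :
    0 ≤ ∫ x in Ioi a, (g' x ^ 2 / 2 + V x * g x ^ 2) := by
  have hbdry : Tendsto (fun p : ℝ × ℝ => w p.2 * g p.2 ^ 2 / 2 - w p.1 * g p.1 ^ 2 / 2)
      (𝓝[>] a ×ˢ atTop) (𝓝 0) := by
    simpa using ((hright.comp tendsto_snd).div_const 2).sub ((hleft.comp tendsto_fst).div_const 2)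
  refine le_of_tendsto_of_tendsto hbdry (tendsto_intervalIntegral_nhdsGT_prod_atTop hint) ?_
  filter_upwards [prod_mem_prod (Ioo_mem_nhdsGT (lt_add_one a)) (eventually_ge_atTop (a + 1))]
    with p ⟨⟨hp1, hp1'⟩, hp2⟩
  have hsub : Icc p.1 p.2 ⊆ Ioi a := fun x hx => hp1.trans_le hx.1
  exact sub_le_integral_of_riccati (hp1'.le.trans hp2) (fun x hx => hg x (hsub hx))
    (fun x hx => hw x (hsub hx)) (fun x hx => hV x (hsub (Ioo_subset_Icc_self hx)))
    (hint.mono_set hsub)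

theorem tendsto_div_sub_mul_sq_nhdsGT_zero {g g' : ℝ → ℝ} (c d : ℝ)
    (hcont : ContinuousOn g (Ici 0)) (h0 : g 0 = 0)
    (hderiv : ∀ x ∈ Ioi 0, HasDerivAt g (g' x) x)
    (hint : IntegrableOn (fun x => g' x ^ 2) (Ioi 0)) :
    Tendsto (fun x => (c / x - d) * g x ^ 2) (𝓝[>] 0) (𝓝 0) := by
  have hg : Tendsto g (𝓝[>] 0) (𝓝 0) := by
    have h := (hcont 0 (mem_Ici.2 le_rfl)).tendsto.mono_left
      (nhdsWithin_mono 0 Ioi_subset_Ici_self)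
    rwa [h0] at h
  have hg_div : Tendsto (fun x => g x ^ 2 / x) (𝓝[>] 0) (𝓝 0) := by
    simpa [h0] using tendsto_sq_sub_div_nhdsGT hcont hderiv hint
  have h := (hg_div.const_mul c).sub ((hg.pow 2).const_mul d)
  simp only [ne_eq, OfNat.ofNat_ne_zero, not_false_eq_true, zero_pow, mul_zero, sub_zero] at h
  exact h.congr fun x => by ring

theorem tendsto_div_sub_mul_sq_atTop {g : ℝ → ℝ} (c d : ℝ)
    (hg : Tendsto (fun x => g x ^ 2) atTop (𝓝 0)) :
    Tendsto (fun x => (c / x - d) * g x ^ 2) atTop (𝓝 0) := by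
  simpa using (((tendsto_const_nhds (x := c)).div_atTop tendsto_id).sub
    (tendsto_const_nhds (x := d))).mul hg

/-- Lower bound for the radial hydrogen quadratic form with angular momentum `l`:
for `g ∈ H¹₀(0,∞)` (here: `g ∈ H¹(0,∞)` continuous up to `0` with `g 0 = 0`, with
all the integrals involved converging),
`(1/2)∫ g'² + ∫ (l(l+1)/(2r²) - 1/r) g² ≥ -(1/(2(l+1)²)) ∫ g²`. -/
theorem radial_hydrogen_form_lower_bound
    (l : ℕ) (g g' : ℝ → ℝ)
    (hderiv : ∀ r ∈ Set.Ioi (0 : ℝ), HasDerivAt g (g' r) r)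
    (hcont : ContinuousOn g (Set.Ici (0 : ℝ)))
    (h0 : g 0 = 0)
    (hg_L2 : IntegrableOn (fun r => (g r) ^ 2) (Set.Ioi (0 : ℝ)))
    (hg'_L2 : IntegrableOn (fun r => (g' r) ^ 2) (Set.Ioi (0 : ℝ)))
    (hpot : IntegrableOn
      (fun r => ((l : ℝ) * ((l : ℝ) + 1) / (2 * r ^ 2) - 1 / r) * (g r) ^ 2)
      (Set.Ioi (0 : ℝ))) :
    -(1 / (2 * ((l : ℝ) + 1) ^ 2)) * ∫ r in Set.Ioi (0 : ℝ), (g r) ^ 2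
      ≤ (1 / 2) * (∫ r in Set.Ioi (0 : ℝ), (g' r) ^ 2)
        + ∫ r in Set.Ioi (0 : ℝ),
            ((l : ℝ) * ((l : ℝ) + 1) / (2 * r ^ 2) - 1 / r) * (g r) ^ 2 := by
  set a : ℝ := (l : ℝ) + 1
  set U : ℝ → ℝ := fun r => (l : ℝ) * a / (2 * r ^ 2) - 1 / r
  have hsplit : (fun r => g' r ^ 2 / 2 + (U r + 1 / (2 * a ^ 2)) * g r ^ 2)
      = fun r => 1 / 2 * g' r ^ 2 + (U r * g r ^ 2 + 1 / (2 * a ^ 2) * g r ^ 2) := by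
    ext r; ring
  have hU : IntegrableOn (fun r => U r * g r ^ 2 + 1 / (2 * a ^ 2) * g r ^ 2) (Ioi 0) :=
    hpot.add (hg_L2.const_mul _)
  have hform_nonneg := integral_nonneg_of_riccati (w := fun r => a / r - 1 / a)
    (w' := fun r => -a / r ^ 2) (V := fun r => U r + 1 / (2 * a ^ 2)) hderiv
    (fun r hr => (((hasDerivAt_const r a).div (hasDerivAt_id' r) (ne_of_gt hr)).sub_const
      (1 / a)).congr_deriv (by ring))
    (fun r (hr : 0 < r) => by simp only [U, a]; field_simp; ring)
    (by rw [hsplit]; exact (hg'_L2.const_mul _).add hU)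
    (tendsto_div_sub_mul_sq_nhdsGT_zero a (1 / a) hcont h0 hderiv hg'_L2)
    (tendsto_div_sub_mul_sq_atTop a (1 / a) (tendsto_sq_atTop_of_hasDerivAt hderiv hg_L2 hg'_L2))
  rw [hsplit, integral_add (hg'_L2.const_mul _) hU, integral_add hpot (hg_L2.const_mul _),
    integral_const_mul, integral_const_mul] at hform_nonneg
  linarith
end
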